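/- Fix real numbers p > 0 and j0 ≥ 0, and let C ∈ ℝ satisfy C² = j0²·p². For n ∈ ℕ set G(n) = sgn(C)·j0·(n+1), F(n) = (j0² + (n+1)² − 1)/2, ε_n = √(p²/(j0² + (n+1)² − 1)), α_j(n) = √((2F(n) + 1 − j² − G(n)²/j²)/((2j+1)(2j−1))), and β_j(n) = G(n)/(j(j+1)). Then for every real j with j > 1/2 and j ≥ j0, and every real m with −j ≤ m ≤ j, the following three limits hold as n → ∞: (i) ε_n·α_j(n)·√((j+m)(j−m)) → α̃_j·√((j+m)(j−m)); (ii) ε_n·β_j(n)·m → (C/(j(j+1)))·m; (iii) ε_n·α_{j+1}(n)·√((j+m+1)(j−m+1)) → α̃_{j+1}·√((j+m+1)(j−m+1)); where α̃_j = √((p² − C²/j²)/((2j+1)(2j−1))). (These are the limits of the matrix elements ⟨j+k, m| ρ_{F(n),G(n)}(ε_n N₃) |j, m⟩ for k = −1, 0, 1 in Theorem 1, converging to the matrix elements of η_{p²,C}(P₃).) -/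

import Mathlib

/-- Contraction parameter ε_n = √(p²/(j0² + (n+1)² − 1)). -/
noncomputable def epsSeq (p j0 : ℝ) (n : ℕ) : ℝ :=
  Real.sqrt (p ^ 2 / (j0 ^ 2 + ((n : ℝ) + 1) ^ 2 - 1))

/-- G(n) = sgn(C)·j0·(n+1). -/
noncomputable def Gseq (C j0 : ℝ) (n : ℕ) : ℝ :=
  Real.sign C * j0 * ((n : ℝ) + 1)

/-- F(n) = (j0² + (n+1)² − 1)/2. -/
noncomputable def Fseq (j0 : ℝ) (n : ℕ) : ℝ :=
  (j0 ^ 2 + ((n : ℝ) + 1) ^ 2 - 1) / 2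

/-- α_j(n) = √((2F(n) + 1 − j² − G(n)²/j²)/((2j+1)(2j−1))). -/
noncomputable def alphaSeq (p j0 C j : ℝ) (n : ℕ) : ℝ :=
  Real.sqrt
    ((2 * Fseq j0 n + 1 - j ^ 2 - (Gseq C j0 n) ^ 2 / j ^ 2) /
      ((2 * j + 1) * (2 * j - 1)))

/-- β_j(n) = G(n)/(j(j+1)). -/
noncomputable def betaSeq (C j0 j : ℝ) (n : ℕ) : ℝ :=
  Gseq C j0 n / (j * (j + 1))

/-- α̃_j = √((p² − C²/j²)/((2j+1)(2j−1))). -/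
noncomputable def alphaTilde (p C j : ℝ) : ℝ :=
  Real.sqrt ((p ^ 2 - C ^ 2 / j ^ 2) / ((2 * j + 1) * (2 * j - 1)))

/-!
Write D_n = 2F(n) = j0² + (n+1)² − 1, so that ε_n = √(p²/D_n) and D_n → ∞.
Since G(n)² = (sign C · j0)² (D_n + 1 − j0²), the radicand of α_j(n) is affine in D_n,
say a D_n + b, and ε_n α_j(n) = √(p² (a + b/D_n)) → √(p² a) = α̃_j, because
(sign C · j0 · p)² = C². Likewise ε_n (n+1) = √(p² (1 + (1 − j0²)/D_n)) → |p|, so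
ε_n β_j(n) → sign C · j0 · |p| / (j(j+1)), and sign C · j0 · |p| = sign C · |C| = C as j0 ≥ 0.
-/

open Filter Topology Real

theorem Real.sign_mul_abs (r : ℝ) : sign r * |r| = r := by
  rcases lt_trichotomy r 0 with h | rfl | h
  · rw [sign_of_neg h, abs_of_neg h]; ring
  · simp
  · rw [sign_of_pos h, abs_of_pos h]; ring

theorem Real.sign_sq_mul_sq (r : ℝ) : sign r ^ 2 * r ^ 2 = r ^ 2 := by
  calc sign r ^ 2 * r ^ 2 = (sign r * |r|) ^ 2 := by rw [mul_pow, sq_abs]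
    _ = r ^ 2 := by rw [sign_mul_abs]

theorem tendsto_sqrt_div_mul_sqrt_affine {α : Type*} {l : Filter α} {D : α → ℝ}
    (hD : Tendsto D l atTop) {c : ℝ} (hc : 0 ≤ c) (a b : ℝ) :
    Tendsto (fun x => √(c / D x) * √(a * D x + b)) l (𝓝 √(c * a)) := by
  have hlim : Tendsto (fun x => c * (a + b / D x)) l (𝓝 (c * a)) := by
    simpa using tendsto_const_nhds.mul (tendsto_const_nhds.add (tendsto_const_nhds.div_atTop hD))
  refine hlim.sqrt.congr' ?_
  filter_upwards [hD.eventually_gt_atTop 0] with x hx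
  rw [← sqrt_mul (div_nonneg hc hx.le)]
  congr 1
  field_simp

theorem two_mul_Fseq (j0 : ℝ) (n : ℕ) : 2 * Fseq j0 n = j0 ^ 2 + ((n : ℝ) + 1) ^ 2 - 1 := by
  unfold Fseq
  ring

theorem tendsto_two_mul_Fseq_atTop (j0 : ℝ) : Tendsto (fun n => 2 * Fseq j0 n) atTop atTop := by
  refine tendsto_atTop_mono (fun n => ?_) tendsto_natCast_atTop_atTop
  rw [two_mul_Fseq]
  nlinarith [sq_nonneg j0]

theorem epsSeq_eq_sqrt_div_two_mul_Fseq (p j0 : ℝ) (n : ℕ) :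
    epsSeq p j0 n = √(p ^ 2 / (2 * Fseq j0 n)) := by
  rw [two_mul_Fseq, epsSeq]

theorem alphaSeq_eq_sqrt_affine (p j0 C j : ℝ) (n : ℕ) :
    alphaSeq p j0 C j n =
      √((1 - (sign C * j0) ^ 2 / j ^ 2) / ((2 * j + 1) * (2 * j - 1)) * (2 * Fseq j0 n) +
        (1 - j ^ 2 - (sign C * j0) ^ 2 * (1 - j0 ^ 2) / j ^ 2) / ((2 * j + 1) * (2 * j - 1))) := by
  have hsucc : ((n : ℝ) + 1) ^ 2 = 2 * Fseq j0 n + 1 - j0 ^ 2 := by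
    rw [two_mul_Fseq]
    ring
  rw [alphaSeq, Gseq, mul_pow, hsucc]
  congr 1
  ring

theorem tendsto_epsSeq_mul_alphaSeq {p j0 C : ℝ} (hC : C ^ 2 = j0 ^ 2 * p ^ 2) (j : ℝ) :
    Tendsto (fun n => epsSeq p j0 n * alphaSeq p j0 C j n) atTop (𝓝 (alphaTilde p C j)) := by
  have hC' : C ^ 2 = (sign C * j0) ^ 2 * p ^ 2 := by
    rw [mul_pow, mul_assoc, ← hC, sign_sq_mul_sq]
  convert tendsto_sqrt_div_mul_sqrt_affine (tendsto_two_mul_Fseq_atTop j0) (sq_nonneg p) _ _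
    using 2 with n
  · rw [epsSeq_eq_sqrt_div_two_mul_Fseq, alphaSeq_eq_sqrt_affine]
  · rw [alphaTilde, hC']
    congr 1
    ring

theorem tendsto_epsSeq_mul_succ (p j0 : ℝ) :
    Tendsto (fun n : ℕ => epsSeq p j0 n * ((n : ℝ) + 1)) atTop (𝓝 |p|) := by
  have h := tendsto_sqrt_div_mul_sqrt_affine (tendsto_two_mul_Fseq_atTop j0) (sq_nonneg p)
    1 (1 - j0 ^ 2)
  rw [mul_one, sqrt_sq_eq_abs] at h
  refine h.congr fun n => ?_
  rw [epsSeq_eq_sqrt_div_two_mul_Fseq, two_mul_Fseq,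
    show 1 * (j0 ^ 2 + ((n : ℝ) + 1) ^ 2 - 1) + (1 - j0 ^ 2) = ((n : ℝ) + 1) ^ 2 by ring,
    sqrt_sq (by positivity)]

theorem sign_mul_mul_abs_eq {p j0 C : ℝ} (hj0 : 0 ≤ j0) (hC : C ^ 2 = j0 ^ 2 * p ^ 2) :
    sign C * (j0 * |p|) = C := by
  have habs : |C| = j0 * |p| := by
    rw [← abs_of_nonneg hj0, ← abs_mul, ← sq_eq_sq_iff_abs_eq_abs, hC, mul_pow]
  rw [← habs, sign_mul_abs]

theorem tendsto_epsSeq_mul_betaSeq {p j0 C : ℝ} (hj0 : 0 ≤ j0) (hC : C ^ 2 = j0 ^ 2 * p ^ 2)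
    (j : ℝ) :
    Tendsto (fun n => epsSeq p j0 n * betaSeq C j0 j n) atTop (𝓝 (C / (j * (j + 1)))) := by
  convert (tendsto_epsSeq_mul_succ p j0).mul_const (sign C * j0 / (j * (j + 1))) using 1
  · ext n
    rw [betaSeq, Gseq]
    ring
  · congr 1
    linear_combination -sign_mul_mul_abs_eq hj0 hC / (j * (j + 1))

theorem contraction_N3_matrix_elements_general (p j0 C : ℝ) (hj0 : 0 ≤ j0)
    (hC : C ^ 2 = j0 ^ 2 * p ^ 2) (j : ℝ)
    (m : ℝ) :
    Filter.Tendsto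
        (fun n : ℕ => epsSeq p j0 n * alphaSeq p j0 C j n * Real.sqrt ((j + m) * (j - m)))
        Filter.atTop (nhds (alphaTilde p C j * Real.sqrt ((j + m) * (j - m)))) ∧
    Filter.Tendsto
        (fun n : ℕ => epsSeq p j0 n * betaSeq C j0 j n * m)
        Filter.atTop (nhds (C / (j * (j + 1)) * m)) ∧
    Filter.Tendsto
        (fun n : ℕ => epsSeq p j0 n * alphaSeq p j0 C (j + 1) n *
          Real.sqrt ((j + m + 1) * (j - m + 1)))
        Filter.atTop
        (nhds (alphaTilde p C (j + 1) * Real.sqrt ((j + m + 1) * (j - m + 1)))) :=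
  ⟨(tendsto_epsSeq_mul_alphaSeq hC j).mul_const _,
    (tendsto_epsSeq_mul_betaSeq hj0 hC j).mul_const m,
    (tendsto_epsSeq_mul_alphaSeq hC (j + 1)).mul_const _⟩

theorem contraction_N3_matrix_elements (p j0 C : ℝ) (hp : 0 < p) (hj0 : 0 ≤ j0)
    (hC : C ^ 2 = j0 ^ 2 * p ^ 2) (j : ℝ) (hj : 1 / 2 < j) (hjj0 : j0 ≤ j)
    (m : ℝ) (hm1 : -j ≤ m) (hm2 : m ≤ j) :
    Filter.Tendsto
        (fun n : ℕ => epsSeq p j0 n * alphaSeq p j0 C j n * Real.sqrt ((j + m) * (j - m)))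
        Filter.atTop (nhds (alphaTilde p C j * Real.sqrt ((j + m) * (j - m)))) ∧
    Filter.Tendsto
        (fun n : ℕ => epsSeq p j0 n * betaSeq C j0 j n * m)
        Filter.atTop (nhds (C / (j * (j + 1)) * m)) ∧
    Filter.Tendsto
        (fun n : ℕ => epsSeq p j0 n * alphaSeq p j0 C (j + 1) n *
          Real.sqrt ((j + m + 1) * (j - m + 1)))
        Filter.atTop
        (nhds (alphaTilde p C (j + 1) * Real.sqrt ((j + m + 1) * (j - m + 1)))) :=
  contraction_N3_matrix_elements_general p j0 C hj0 hC j m
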